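/- Let n be a natural number, and let H(q,p) = ½ ∑_{i,j} p_i M^{ij}(q) p_j + h(q) and Ĥ(q,p) = ½ ∑_{i,j} p_i M̂^{ij}(q) p_j + ĥ(q) be simple Hamiltonians on ℝⁿ × ℝⁿ (M, M̂ C¹ matrix-valued, h, ĥ C¹). Then the canonical Poisson bracket {Ĥ,H} is odd in the fiber variable: for every (q,p) ∈ ℝⁿ × ℝⁿ, {Ĥ,H}(q,−p) = −{Ĥ,H}(q,p). -/

import Mathlib

/-! A simple Hamiltonian is even in `p`, so its differential at `(q, -p)` is its differential at
`(q, p)` precomposed with `(u, v) ↦ (u, -v)`. Every term of the Poisson bracket pairs one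
`q`-derivative with one `p`-derivative, hence changes sign. -/

/-- The simple Hamiltonian `H(q,p) = ½ ∑_{i,j} pᵢ M^{ij}(q) pⱼ + h(q)` on `ℝⁿ × ℝⁿ`. -/
noncomputable def simpleHam (n : ℕ) (M : (Fin n → ℝ) → Matrix (Fin n) (Fin n) ℝ)
    (h : (Fin n → ℝ) → ℝ) : (Fin n → ℝ) × (Fin n → ℝ) → ℝ :=
  fun x => (1 / 2) * (∑ i, ∑ j, x.2 i * M x.1 i j * x.2 j) + h x.1

/-- The canonical Poisson bracket
`{F,G}(q,p) = ∑ᵢ (∂F/∂qⁱ ∂G/∂pᵢ − ∂G/∂qⁱ ∂F/∂pᵢ)` on `ℝⁿ × ℝⁿ`. -/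
noncomputable def poissonBracket (n : ℕ) (F G : (Fin n → ℝ) × (Fin n → ℝ) → ℝ)
    (x : (Fin n → ℝ) × (Fin n → ℝ)) : ℝ :=
  ∑ i, (fderiv ℝ F x (Pi.single i 1, 0) * fderiv ℝ G x (0, Pi.single i 1)
      - fderiv ℝ G x (Pi.single i 1, 0) * fderiv ℝ F x (0, Pi.single i 1))

section EvenInSnd

variable {E F G : Type*} [NormedAddCommGroup E] [NormedSpace ℝ E] [NormedAddCommGroup F]
  [NormedSpace ℝ F] [NormedAddCommGroup G] [NormedSpace ℝ G]

theorem fderiv_apply_neg_snd_of_even {f : E × F → G} (hf : ∀ x y, f (x, -y) = f (x, y))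
    (x : E) (y : F) (u : E) (v : F) :
    fderiv ℝ f (x, -y) (u, v) = fderiv ℝ f (x, y) (u, -v) := by
  let σ : (E × F) ≃L[ℝ] (E × F) :=
    (ContinuousLinearEquiv.refl ℝ E).prodCongr (ContinuousLinearEquiv.neg ℝ)
  have hfσ : f ∘ σ = f := funext fun z => hf z.1 z.2
  have key := σ.comp_right_fderiv (f := f) (x := (x, -y))
  rw [hfσ] at key
  simp [key, σ]

end EvenInSnd

theorem poissonBracket_neg_snd_of_even (n : ℕ) {F G : (Fin n → ℝ) × (Fin n → ℝ) → ℝ}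
    (hF : ∀ q p, F (q, -p) = F (q, p)) (hG : ∀ q p, G (q, -p) = G (q, p)) (q p : Fin n → ℝ) :
    poissonBracket n F G (q, -p) = -poissonBracket n F G (q, p) := by
  simp only [poissonBracket, fderiv_apply_neg_snd_of_even hF, fderiv_apply_neg_snd_of_even hG,
    neg_zero, ← Finset.sum_neg_distrib]
  refine Finset.sum_congr rfl fun i _ => ?_
  have hv : ((0 : Fin n → ℝ), -(Pi.single i 1 : Fin n → ℝ)) = -(0, Pi.single i 1) := by simp
  rw [hv, map_neg, map_neg]
  ring

theorem simpleHam_neg_snd (n : ℕ) (M : (Fin n → ℝ) → Matrix (Fin n) (Fin n) ℝ)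
    (h : (Fin n → ℝ) → ℝ) (q p : Fin n → ℝ) :
    simpleHam n M h (q, -p) = simpleHam n M h (q, p) := by
  simp [simpleHam]

theorem poisson_bracket_of_simple_hamiltonians_odd_general
    (n : ℕ)
    (M Mhat : (Fin n → ℝ) → Matrix (Fin n) (Fin n) ℝ)
    (h hhat : (Fin n → ℝ) → ℝ) :
    ∀ (q p : Fin n → ℝ),
      poissonBracket n (simpleHam n Mhat hhat) (simpleHam n M h) (q, -p)
        = -poissonBracket n (simpleHam n Mhat hhat) (simpleHam n M h) (q, p) :=
  poissonBracket_neg_snd_of_even n (simpleHam_neg_snd n Mhat hhat) (simpleHam_neg_snd n M h)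

/-- the canonical Poisson bracket of two simple Hamiltonians is an odd
function of the fiber (momentum) variable: `{Ĥ,H}(q,−p) = −{Ĥ,H}(q,p)`. -/
theorem poisson_bracket_of_simple_hamiltonians_odd
    (n : ℕ)
    (M Mhat : (Fin n → ℝ) → Matrix (Fin n) (Fin n) ℝ)
    (h hhat : (Fin n → ℝ) → ℝ)
    (hM : ∀ i j, ContDiff ℝ 1 fun q => M q i j)
    (hMhat : ∀ i j, ContDiff ℝ 1 fun q => Mhat q i j)
    (hh : ContDiff ℝ 1 h) (hhhat : ContDiff ℝ 1 hhat) :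
    ∀ (q p : Fin n → ℝ),
      poissonBracket n (simpleHam n Mhat hhat) (simpleHam n M h) (q, -p)
        = -poissonBracket n (simpleHam n Mhat hhat) (simpleHam n M h) (q, p) :=
  poisson_bracket_of_simple_hamiltonians_odd_general n M Mhat h hhat
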